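/- Let N be a positive integer and D_m = y(1+y)d²/dy² + [1-(N-1)y]d/dy + m(N-m). If m is an integer with 0 ≤ m ≤ N, m ≠ N/2, and f is a polynomial of degree strictly less than max(m, N-m), then the unique formal power series solution u of D_m u = f with u(0) = 0 is a polynomial of degree at most max(m, N-m). -/

import Mathlib

/-!
Comparing coefficients of `y^j` turns `D_m u = f` into the first-order recursion
`(j+1)² u_{j+1} = f_j - (j-m)(j-(N-m)) u_j`, which determines `u` from `u(0)`. At
`j = M := max(m, N-m)` the factor `(j-m)(j-(N-m))` vanishes, so once `f_j = 0` for `j ≥ M`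
the recursion gives `u_{M+1} = 0`, and then `u_j = 0` for all `j > M`.
-/

open PowerSeries

/-- The differential operator `D_m = y(1+y) d²/dy² + [1-(N-1)y] d/dy + m(N-m)`
acting on formal power series over `ℚ`. -/
noncomputable def Dop (N m : ℕ) (u : PowerSeries ℚ) : PowerSeries ℚ :=
  (PowerSeries.X * (1 + PowerSeries.X)) *
      (PowerSeries.derivative ℚ (PowerSeries.derivative ℚ u))
    + (1 - PowerSeries.C ((N : ℚ) - 1) * PowerSeries.X) * (PowerSeries.derivative ℚ u)
    + PowerSeries.C ((m : ℚ) * ((N : ℚ) - (m : ℚ))) * u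

lemma coeff_Dop (N m : ℕ) (u : ℚ⟦X⟧) (j : ℕ) :
    coeff j (Dop N m u) =
      ((j : ℚ) + 1) ^ 2 * coeff (j + 1) u + ((j : ℚ) - m) * ((j : ℚ) - (N - m)) * coeff j u := by
  generalize ha : (N : ℚ) - 1 = a
  have hDop : Dop N m u = X * derivative ℚ (derivative ℚ u)
      + X * (X * derivative ℚ (derivative ℚ u)) + derivative ℚ u
      - C a * (X * derivative ℚ u) + C ((m : ℚ) * (N - m)) * u := by
    rw [Dop, ha]; ring
  rw [hDop]
  rcases j with _ | _ | j <;>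
    simp only [map_add, map_sub, coeff_succ_X_mul, coeff_zero_X_mul, coeff_C_mul,
      coeff_derivative] <;> subst ha <;> push_cast <;> ring

lemma Dop_eq_iff (N m : ℕ) (u f : ℚ⟦X⟧) :
    Dop N m u = f ↔ ∀ j : ℕ, coeff (j + 1) u =
      (coeff j f - ((j : ℚ) - m) * ((j : ℚ) - (N - m)) * coeff j u) / ((j : ℚ) + 1) ^ 2 := by
  have hpos (j : ℕ) : ((j : ℚ) + 1) ^ 2 ≠ 0 := by positivity
  simp only [PowerSeries.ext_iff, coeff_Dop, eq_div_iff (hpos _)]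
  exact forall_congr' fun j => by constructor <;> intro h <;> linarith

noncomputable def DopSolutionCoeff (N m : ℕ) (f : ℚ⟦X⟧) (c : ℚ) : ℕ → ℚ
  | 0 => c
  | j + 1 => (coeff j f - ((j : ℚ) - m) * ((j : ℚ) - (N - m)) * DopSolutionCoeff N m f c j)
      / ((j : ℚ) + 1) ^ 2

theorem existsUnique_Dop_eq (N m : ℕ) (f : ℚ⟦X⟧) (c : ℚ) :
    ∃! u : ℚ⟦X⟧, Dop N m u = f ∧ constantCoeff u = c := by
  refine ⟨mk (DopSolutionCoeff N m f c), ⟨?_, rfl⟩, ?_⟩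
  · rw [Dop_eq_iff]
    intro j
    simp only [coeff_mk, DopSolutionCoeff]
  · rintro u ⟨hu, hu0⟩
    rw [Dop_eq_iff] at hu
    ext j
    induction j with
    | zero => simpa [DopSolutionCoeff] using hu0
    | succ j ih => rw [hu, ih, coeff_mk, coeff_mk, DopSolutionCoeff]

theorem coeff_eq_zero_of_Dop_eq {N m M : ℕ} {u f : ℚ⟦X⟧} (hu : Dop N m u = f)
    (hM : ((M : ℚ) - m) * ((M : ℚ) - (N - m)) = 0) (hf : ∀ j, M ≤ j → coeff j f = 0) :
    ∀ j, M < j → coeff j u = 0 := by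
  rw [Dop_eq_iff] at hu
  intro j hj
  induction j, hj using Nat.le_induction with
  | base => rw [hu, hf M le_rfl, hM, zero_mul, sub_zero, zero_div]
  | succ j hj ih => rw [hu, hf j (Nat.le_of_succ_le hj), ih, mul_zero, sub_zero, zero_div]

lemma max_sub_mul_max_sub_eq_zero (N m : ℕ) :
    (((max m (N - m) : ℕ) : ℚ) - m) * (((max m (N - m) : ℕ) : ℚ) - (N - m)) = 0 := by
  rcases le_total (N - m) m with h | h
  · simp [max_eq_left h]
  · rw [max_eq_right h, Nat.cast_sub (by omega)]
    ring

theorem solution_polynomial_of_low_degree_source_general (N m : ℕ) (f : PowerSeries ℚ)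
    (hf : ∀ j : ℕ, max m (N - m) ≤ j → PowerSeries.coeff j f = 0) :
    (∃! u : PowerSeries ℚ, Dop N m u = f ∧ PowerSeries.constantCoeff u = 0) ∧
      ∀ u : PowerSeries ℚ, Dop N m u = f → PowerSeries.constantCoeff u = 0 →
        ∀ j : ℕ, max m (N - m) < j → PowerSeries.coeff j u = 0 :=
  ⟨existsUnique_Dop_eq N m f 0, fun _ hu _ =>
    coeff_eq_zero_of_Dop_eq hu (max_sub_mul_max_sub_eq_zero N m) hf⟩

/-- If `m ≠ N/2` and `f` is a polynomial of degree `< max(m, N-m)`, the unique formal power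
series solution of `D_m u = f` with `u(0) = 0` is a polynomial of degree `≤ max(m, N-m)`. -/
theorem solution_polynomial_of_low_degree_source (N m : ℕ) (hN : 0 < N) (hm : m ≤ N)
    (hm2 : 2 * m ≠ N) (f : PowerSeries ℚ)
    (hf : ∀ j : ℕ, max m (N - m) ≤ j → PowerSeries.coeff j f = 0) :
    (∃! u : PowerSeries ℚ, Dop N m u = f ∧ PowerSeries.constantCoeff u = 0) ∧
      ∀ u : PowerSeries ℚ, Dop N m u = f → PowerSeries.constantCoeff u = 0 →
        ∀ j : ℕ, max m (N - m) < j → PowerSeries.coeff j u = 0 :=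
  solution_polynomial_of_low_degree_source_general N m f hf
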